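/- Second comparison lemma form: with the same setup, X - X̂ = A_{K,L}ᵀ(X - X̂)A_{K,L} + (K - K̂)ᵀÛ + Ûᵀ(K - K̂) + (K - K̂)ᵀR₁(K - K̂) + (L - L̂)ᵀV̂ + V̂ᵀ(L - L̂) - (L - L̂)ᵀR₂(L - L̂) + (A_{K,L} - A_{K̂,L̂})ᵀ X̂ (A_{K,L} - A_{K̂,L̂}), where Û = R₁K̂ - B₁ᵀX̂ A_{K̂,L̂} and V̂ = -R₂L̂ - B₂ᵀX̂ A_{K̂,L̂}. -/

import Mathlib

/-!
The Stein equation `Mᵀ D M = D` has only the trivial solution when `M` is Schur stable, since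
iterating it gives `D = (Mᵏ)ᵀ D Mᵏ → 0` by Gelfand's formula. Hence the value matrix `X̂` of the
stable pair `(K̂, L̂)` is symmetric (its transpose solves the same Lyapunov equation), and with
`R₁`, `R₂` and `X̂` symmetric the claimed formula for `X - X̂` is a polynomial identity obtained by
subtracting the two Lyapunov equations and expanding.
-/

open Matrix

/-- A real square matrix is Schur stable if every complex eigenvalue has modulus `< 1`. -/
def IsSchur {n : ℕ} (M : Matrix (Fin n) (Fin n) ℝ) : Prop :=
  ∀ μ ∈ spectrum ℂ (M.map Complex.ofReal), ‖μ‖ < 1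

open Filter Topology
open scoped NNReal ENNReal

theorem tendsto_pow_atTop_nhds_zero_of_spectralRadius_lt_one {A : Type*} [NormedRing A]
    [NormedAlgebra ℂ A] [CompleteSpace A] {a : A} (h : spectralRadius ℂ a < 1) :
    Tendsto (fun k : ℕ => a ^ k) atTop (𝓝 0) := by
  obtain ⟨r, hr, hr1⟩ := ENNReal.lt_iff_exists_nnreal_btwn.mp h
  have hgelfand := spectrum.pow_nnnorm_pow_one_div_tendsto_nhds_spectralRadius a
  have hbound : ∀ᶠ k : ℕ in atTop, ‖a ^ k‖ ≤ (r : ℝ) ^ k := by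
    filter_upwards [hgelfand.eventually_lt_const hr, eventually_gt_atTop 0] with k hk hk0
    rw [← ENNReal.coe_rpow_of_nonneg _ (by positivity), ENNReal.coe_lt_coe, one_div,
      NNReal.rpow_inv_lt_iff (by positivity), NNReal.rpow_natCast] at hk
    exact_mod_cast hk.le
  exact squeeze_zero_norm' hbound
    (tendsto_pow_atTop_nhds_zero_of_lt_one r.coe_nonneg (by exact_mod_cast hr1))

theorem Matrix.IsSymm.transpose_mul_mul {α m n : Type*} [CommSemiring α] [Fintype m]
    {S : Matrix m m α} (hS : S.IsSymm) (P : Matrix m n α) : (Pᵀ * S * P).IsSymm := by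
  simp only [IsSymm, transpose_mul, transpose_transpose, hS.eq, Matrix.mul_assoc]

namespace IsSchur

variable {n : ℕ} {M : Matrix (Fin n) (Fin n) ℝ}

theorem tendsto_pow_atTop_nhds_zero (hM : IsSchur M) :
    Tendsto (fun k : ℕ => M ^ k) atTop (𝓝 0) := by
  -- any Banach algebra norm on complex matrices will do for Gelfand's formula
  let _ := Matrix.linftyOpNormedRing (n := Fin n) (α := ℂ)
  let _ := Matrix.linftyOpNormedAlgebra (n := Fin n) (R := ℂ) (α := ℂ)
  have : CompleteSpace (Matrix (Fin n) (Fin n) ℂ) := FiniteDimensional.complete ℂ _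
  rcases isEmpty_or_nonempty (Fin n) with hn | hn
  · simp [Subsingleton.elim _ (0 : Matrix (Fin n) (Fin n) ℝ)]
  have hρ : spectralRadius ℂ (M.map Complex.ofReal) < 1 := by
    simpa using spectrum.spectralRadius_lt_of_forall_lt (M.map Complex.ofReal) (r := 1)
      fun z hz => by simpa [← NNReal.coe_lt_coe] using hM z hz
  have hre := (continuous_id.matrix_map Complex.continuous_re).tendsto _ |>.comp
    (tendsto_pow_atTop_nhds_zero_of_spectralRadius_lt_one hρ)
  refine hre.congr fun k => ?_
  rw [Function.comp_apply, show M.map Complex.ofReal = Complex.ofRealHom.mapMatrix M from rfl,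
    ← map_pow]
  ext; simp

theorem eq_zero_of_transpose_mul_mul_eq (hM : IsSchur M) {D : Matrix (Fin n) (Fin n) ℝ}
    (hD : Mᵀ * D * M = D) : D = 0 := by
  have hiter : ∀ k : ℕ, (M ^ k)ᵀ * D * M ^ k = D := by
    intro k
    induction k with
    | zero => simp
    | succ k ih =>
      calc (M ^ (k + 1))ᵀ * D * M ^ (k + 1) = (M ^ k)ᵀ * (Mᵀ * D * M) * M ^ k := by
            rw [pow_succ', transpose_mul]; simp only [Matrix.mul_assoc]
        _ = D := by rw [hD, ih]
  have hpow := hM.tendsto_pow_atTop_nhds_zero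
  have hlim := (((continuous_id.matrix_transpose.tendsto 0).comp hpow).mul_const D).mul hpow
  simp only [Function.comp_def, id, hiter, transpose_zero, Matrix.zero_mul] at hlim
  exact tendsto_nhds_unique tendsto_const_nhds hlim

theorem isSymm_of_stein (hM : IsSchur M) {X C : Matrix (Fin n) (Fin n) ℝ} (hC : C.IsSymm)
    (hX : Mᵀ * X * M + C = X) : X.IsSymm := by
  have hXT : Mᵀ * Xᵀ * M + C = Xᵀ := by
    simpa [transpose_mul, hC.eq, Matrix.mul_assoc] using congrArg transpose hX
  have hfix : Mᵀ * (X - Xᵀ) * M = X - Xᵀ := by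
    rw [Matrix.mul_sub, Matrix.sub_mul, eq_sub_of_add_eq hX, eq_sub_of_add_eq hXT,
      sub_sub_sub_cancel_right]
  exact (sub_eq_zero.mp (hM.eq_zero_of_transpose_mul_mul_eq hfix)).symm

end IsSchur

theorem lq_value_sub_eq {𝕜 n m₁ m₂ : Type*} [CommRing 𝕜] [Fintype n] [Fintype m₁] [Fintype m₂]
    (A : Matrix n n 𝕜) (B₁ : Matrix n m₁ 𝕜) (B₂ : Matrix n m₂ 𝕜) (Q : Matrix n n 𝕜)
    (R₁ : Matrix m₁ m₁ 𝕜) (R₂ : Matrix m₂ m₂ 𝕜) (K Khat : Matrix m₁ n 𝕜) (L Lhat : Matrix m₂ n 𝕜)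
    (X Xhat : Matrix n n 𝕜) (hR₁ : R₁.IsSymm) (hR₂ : R₂.IsSymm) (hXhat_symm : Xhat.IsSymm)
    (hX : (A - B₁ * K - B₂ * L)ᵀ * X * (A - B₁ * K - B₂ * L)
            + Q + Kᵀ * R₁ * K - Lᵀ * R₂ * L = X)
    (hXhat : (A - B₁ * Khat - B₂ * Lhat)ᵀ * Xhat * (A - B₁ * Khat - B₂ * Lhat)
            + Q + Khatᵀ * R₁ * Khat - Lhatᵀ * R₂ * Lhat = Xhat)
    (Uhat : Matrix m₁ n 𝕜) (Vhat : Matrix m₂ n 𝕜)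
    (hUhat : Uhat = R₁ * Khat - B₁ᵀ * Xhat * (A - B₁ * Khat - B₂ * Lhat))
    (hVhat : Vhat = -(R₂ * Lhat) - B₂ᵀ * Xhat * (A - B₁ * Khat - B₂ * Lhat)) :
    X - Xhat =
      (A - B₁ * K - B₂ * L)ᵀ * (X - Xhat) * (A - B₁ * K - B₂ * L)
      + (K - Khat)ᵀ * Uhat + Uhatᵀ * (K - Khat) + (K - Khat)ᵀ * R₁ * (K - Khat)
      + (L - Lhat)ᵀ * Vhat + Vhatᵀ * (L - Lhat) - (L - Lhat)ᵀ * R₂ * (L - Lhat)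
      + ((A - B₁ * K - B₂ * L) - (A - B₁ * Khat - B₂ * Lhat))ᵀ * Xhat
          * ((A - B₁ * K - B₂ * L) - (A - B₁ * Khat - B₂ * Lhat)) := by
  subst hUhat hVhat
  conv_lhs => rw [← hX, ← hXhat]
  simp only [transpose_sub, transpose_mul, transpose_neg, transpose_transpose, hR₁.eq, hR₂.eq,
    hXhat_symm.eq, Matrix.sub_mul, Matrix.mul_sub, Matrix.neg_mul, Matrix.mul_neg,
    Matrix.mul_assoc]
  abel

theorem lq_game_comparison'_general {n m₁ m₂ : ℕ}
    (A : Matrix (Fin n) (Fin n) ℝ) (B₁ : Matrix (Fin n) (Fin m₁) ℝ)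
    (B₂ : Matrix (Fin n) (Fin m₂) ℝ) (Q : Matrix (Fin n) (Fin n) ℝ)
    (R₁ : Matrix (Fin m₁) (Fin m₁) ℝ) (R₂ : Matrix (Fin m₂) (Fin m₂) ℝ)
    (K Khat : Matrix (Fin m₁) (Fin n) ℝ) (L Lhat : Matrix (Fin m₂) (Fin n) ℝ)
    (X Xhat : Matrix (Fin n) (Fin n) ℝ)
    (hQ : Q.IsSymm) (hR₁ : R₁.PosDef) (hR₂ : R₂.PosDef)
    (hstabhat : IsSchur (A - B₁ * Khat - B₂ * Lhat))
    (hX : (A - B₁ * K - B₂ * L)ᵀ * X * (A - B₁ * K - B₂ * L)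
            + Q + Kᵀ * R₁ * K - Lᵀ * R₂ * L = X)
    (hXhat : (A - B₁ * Khat - B₂ * Lhat)ᵀ * Xhat * (A - B₁ * Khat - B₂ * Lhat)
            + Q + Khatᵀ * R₁ * Khat - Lhatᵀ * R₂ * Lhat = Xhat)
    (Uhat : Matrix (Fin m₁) (Fin n) ℝ) (Vhat : Matrix (Fin m₂) (Fin n) ℝ)
    (hUhat : Uhat = R₁ * Khat - B₁ᵀ * Xhat * (A - B₁ * Khat - B₂ * Lhat))
    (hVhat : Vhat = -(R₂ * Lhat) - B₂ᵀ * Xhat * (A - B₁ * Khat - B₂ * Lhat)) :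
    X - Xhat =
      (A - B₁ * K - B₂ * L)ᵀ * (X - Xhat) * (A - B₁ * K - B₂ * L)
      + (K - Khat)ᵀ * Uhat + Uhatᵀ * (K - Khat) + (K - Khat)ᵀ * R₁ * (K - Khat)
      + (L - Lhat)ᵀ * Vhat + Vhatᵀ * (L - Lhat) - (L - Lhat)ᵀ * R₂ * (L - Lhat)
      + ((A - B₁ * K - B₂ * L) - (A - B₁ * Khat - B₂ * Lhat))ᵀ * Xhat
          * ((A - B₁ * K - B₂ * L) - (A - B₁ * Khat - B₂ * Lhat)) := by
  have hR₁_symm : R₁.IsSymm := isHermitian_iff_isSymm.mp hR₁.isHermitian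
  have hR₂_symm : R₂.IsSymm := isHermitian_iff_isSymm.mp hR₂.isHermitian
  have hXhat_symm : Xhat.IsSymm :=
    hstabhat.isSymm_of_stein
      ((hQ.add (hR₁_symm.transpose_mul_mul Khat)).sub (hR₂_symm.transpose_mul_mul Lhat))
      (by rw [← add_sub_assoc, ← add_assoc, hXhat])
  exact lq_value_sub_eq A B₁ B₂ Q R₁ R₂ K Khat L Lhat X Xhat hR₁_symm hR₂_symm hXhat_symm
    hX hXhat Uhat Vhat hUhat hVhat

/-- Comparison lemma for zero-sum LQ games (form centered at `(K̂, L̂)`). -/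
theorem lq_game_comparison' {n m₁ m₂ : ℕ}
    (A : Matrix (Fin n) (Fin n) ℝ) (B₁ : Matrix (Fin n) (Fin m₁) ℝ)
    (B₂ : Matrix (Fin n) (Fin m₂) ℝ) (Q : Matrix (Fin n) (Fin n) ℝ)
    (R₁ : Matrix (Fin m₁) (Fin m₁) ℝ) (R₂ : Matrix (Fin m₂) (Fin m₂) ℝ)
    (K Khat : Matrix (Fin m₁) (Fin n) ℝ) (L Lhat : Matrix (Fin m₂) (Fin n) ℝ)
    (X Xhat : Matrix (Fin n) (Fin n) ℝ)
    (hQ : Q.IsSymm) (hR₁ : R₁.PosDef) (hR₂ : R₂.PosDef)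
    (hstab : IsSchur (A - B₁ * K - B₂ * L))
    (hstabhat : IsSchur (A - B₁ * Khat - B₂ * Lhat))
    (hX : (A - B₁ * K - B₂ * L)ᵀ * X * (A - B₁ * K - B₂ * L)
            + Q + Kᵀ * R₁ * K - Lᵀ * R₂ * L = X)
    (hXhat : (A - B₁ * Khat - B₂ * Lhat)ᵀ * Xhat * (A - B₁ * Khat - B₂ * Lhat)
            + Q + Khatᵀ * R₁ * Khat - Lhatᵀ * R₂ * Lhat = Xhat)
    (Uhat : Matrix (Fin m₁) (Fin n) ℝ) (Vhat : Matrix (Fin m₂) (Fin n) ℝ)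
    (hUhat : Uhat = R₁ * Khat - B₁ᵀ * Xhat * (A - B₁ * Khat - B₂ * Lhat))
    (hVhat : Vhat = -(R₂ * Lhat) - B₂ᵀ * Xhat * (A - B₁ * Khat - B₂ * Lhat)) :
    X - Xhat =
      (A - B₁ * K - B₂ * L)ᵀ * (X - Xhat) * (A - B₁ * K - B₂ * L)
      + (K - Khat)ᵀ * Uhat + Uhatᵀ * (K - Khat) + (K - Khat)ᵀ * R₁ * (K - Khat)
      + (L - Lhat)ᵀ * Vhat + Vhatᵀ * (L - Lhat) - (L - Lhat)ᵀ * R₂ * (L - Lhat)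
      + ((A - B₁ * K - B₂ * L) - (A - B₁ * Khat - B₂ * Lhat))ᵀ * Xhat
          * ((A - B₁ * K - B₂ * L) - (A - B₁ * Khat - B₂ * Lhat)) :=
  lq_game_comparison'_general A B₁ B₂ Q R₁ R₂ K Khat L Lhat X Xhat hQ hR₁ hR₂ hstabhat hX hXhat Uhat
    Vhat hUhat hVhat
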